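/- Let h : R^3 × R^3 → C be a smooth compactly supported (test) function, m > 0, E_l = sqrt(|l|²+m²), ψ(q,k) = E_{q+k} − E_q − |k| and ψ'(q,k) = q·k/E_q − |k|. Then I_t := ∫∫ d³q d³k h(q,k) (e^{−iψ t} − e^{−iψ' t}) → 0 as |t| → ∞. -/

import Mathlib

open MeasureTheory Filter RealInnerProductSpace
open Set Metric
open scoped NNReal ENNReal

local notation "V" => EuclideanSpace ℝ (Fin 3)


lemma osc1D_bound (a : ℝ → ℂ) (φ dφ : ℝ → ℝ)
    (ha : ContDiff ℝ (⊤ : ℕ∞) a)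
    (hφ : ∀ r, HasDerivAt φ (dφ r) r) (hdφ : ContDiff ℝ (⊤ : ℕ∞) dφ)
    (c : ℝ → ℂ) (hc : ContDiff ℝ (⊤ : ℕ∞) c) (hcc : HasCompactSupport c)
    (hc0 : c 0 = 0) (hcdφ : ∀ r, c r * (dφ r : ℂ) = a r) (t : ℝ) (ht : t ≠ 0) :
    ‖∫ r in Set.Ioi (0:ℝ), a r * Complex.exp (-Complex.I * t * φ r)‖
      ≤ (∫ r in Set.Ioi (0:ℝ), ‖deriv c r‖) / |t| := by
  have hφc : Continuous φ := continuous_iff_continuousAt.2 fun r => (hφ r).continuousAt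
  set e : ℝ → ℂ := fun r => Complex.exp (-Complex.I * t * φ r) with he_def
  have he_cont : Continuous e :=
    Complex.continuous_exp.comp (continuous_const.mul (Complex.continuous_ofReal.comp hφc))
  have he_norm : ∀ r, ‖e r‖ = 1 := by
    intro r
    simp only [he_def, Complex.norm_exp]
    have : (-Complex.I * t * φ r).re = 0 := by simp
    rw [this, Real.exp_zero]
  have hed : ∀ r, HasDerivAt e (e r * (-Complex.I * t * dφ r)) r := by
    intro r
    have h1 : HasDerivAt (fun r : ℝ => ((φ r : ℝ) : ℂ)) (dφ r) r := (hφ r).ofReal_comp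
    have h2 : HasDerivAt (fun r : ℝ => -Complex.I * t * ((φ r : ℝ) : ℂ))
        (-Complex.I * t * dφ r) r := by
      simpa [mul_assoc] using h1.const_mul (-Complex.I * t)
    have h3 := h2.cexp
    convert h3 using 1 <;> ring
  have hca : HasCompactSupport a := by
    have : Function.support a ⊆ tsupport c := by
      intro r hr
      apply subset_tsupport c
      intro hcr
      apply hr
      rw [← hcdφ r, hcr, zero_mul]
    exact HasCompactSupport.intro hcc fun r hr => by
      by_contra har; exact hr (this har)
  have hcd : ∀ r, HasDerivAt c (deriv c r) r :=
    fun r => ((hc.differentiable (by simp)) r).hasDerivAt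
  have hc' : Continuous (deriv c) := hc.continuous_deriv (by simp)
  have hcc' : HasCompactSupport (deriv c) := hcc.deriv
  set g : ℝ → ℂ := fun r => c r * e r with hg_def
  set g' : ℝ → ℂ := fun r => deriv c r * e r + c r * (e r * (-Complex.I * t * dφ r)) with hg'_def
  have hgd : ∀ r, HasDerivAt g (g' r) r := fun r => (hcd r).mul (hed r)
  have hg'int : MeasureTheory.IntegrableOn g' (Set.Ioi (0:ℝ)) := by
    apply MeasureTheory.Integrable.integrableOn
    apply Continuous.integrable_of_hasCompactSupport
    · exact (hc'.mul he_cont).add (hc.continuous.mul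
        (he_cont.mul (continuous_const.mul (Complex.continuous_ofReal.comp hdφ.continuous))))
    · exact (hcc'.mul_right).add (hcc.mul_right)
  have hgtop : Tendsto g atTop (nhds 0) := by
    obtain ⟨R, hR⟩ := hcc.isCompact.isBounded.subset_closedBall 0
    apply Tendsto.congr' _ tendsto_const_nhds
    filter_upwards [Filter.eventually_gt_atTop R] with r hr
    have : c r = 0 := by
      by_contra hcr
      have := hR (subset_tsupport c hcr)
      simp only [Metric.mem_closedBall, Real.dist_eq, sub_zero] at this
      have := le_abs_self r
      linarith [le_trans this ‹|r| ≤ R›]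
    simp [hg_def, this]
  have hig' : ∫ r in Set.Ioi (0:ℝ), g' r = -(g 0) := by
    have := integral_Ioi_of_hasDerivAt_of_tendsto' (f := g) (f' := g')
      (fun x _ => hgd x) hg'int hgtop
    rw [this, zero_sub]
  have hg0 : g 0 = 0 := by simp [hg_def, hc0]
  have hae_int : MeasureTheory.IntegrableOn (fun r => a r * e r) (Set.Ioi (0:ℝ)) :=
    ((ha.continuous.mul he_cont).integrable_of_hasCompactSupport hca.mul_right).integrableOn
  have hce_int : MeasureTheory.IntegrableOn (fun r => deriv c r * e r) (Set.Ioi (0:ℝ)) :=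
    ((hc'.mul he_cont).integrable_of_hasCompactSupport hcc'.mul_right).integrableOn
  have hsplit : ∫ r in Set.Ioi (0:ℝ), g' r
      = (∫ r in Set.Ioi (0:ℝ), deriv c r * e r)
        + (-Complex.I * t) * ∫ r in Set.Ioi (0:ℝ), a r * e r := by
    rw [← MeasureTheory.integral_const_mul]
    rw [← MeasureTheory.integral_add hce_int (hae_int.const_mul _)]
    apply MeasureTheory.integral_congr_ae
    filter_upwards with r
    simp only [hg'_def]
    rw [← hcdφ r]
    ring
  set A := ∫ r in Set.Ioi (0:ℝ), a r * e r with hA_def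
  set C := ∫ r in Set.Ioi (0:ℝ), deriv c r * e r with hC_def
  have h0 : (-Complex.I * t) * A = -C := by
    have := hsplit
    rw [hig', hg0, neg_zero] at this
    linear_combination -this
  have h1 : |t| * ‖A‖ = ‖C‖ := by
    have : ‖(-Complex.I * (t:ℂ)) * A‖ = ‖-C‖ := by rw [h0]
    simpa [norm_mul, Real.norm_eq_abs] using this
  have hCle : ‖C‖ ≤ ∫ r in Set.Ioi (0:ℝ), ‖deriv c r‖ := by
    refine (MeasureTheory.norm_integral_le_integral_norm _).trans_eq ?_
    apply MeasureTheory.integral_congr_ae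
    filter_upwards with r
    rw [norm_mul, he_norm, mul_one]
  rw [le_div_iff₀ (abs_pos.2 ht), mul_comm, h1]
  exact hCle

lemma osc1D (a : ℝ → ℂ) (φ dφ : ℝ → ℝ)
    (ha : ContDiff ℝ (⊤ : ℕ∞) a) (hca : HasCompactSupport a) (ha0 : a 0 = 0)
    (hφ : ∀ r, HasDerivAt φ (dφ r) r) (hdφ : ContDiff ℝ (⊤ : ℕ∞) dφ)
    (hneg : ∀ r, dφ r < 0) :
    Tendsto (fun t : ℝ => ∫ r in Set.Ioi (0:ℝ), a r * Complex.exp (-Complex.I * t * φ r))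
      (cocompact ℝ) (nhds 0) := by
  have hdφ0 : ∀ r, dφ r ≠ 0 := fun r => (hneg r).ne
  set c : ℝ → ℂ := fun r => a r * ((dφ r : ℂ))⁻¹ with hc_def
  have hdφC : ContDiff ℝ (⊤ : ℕ∞) (fun r => ((dφ r : ℝ) : ℂ)) := Complex.ofRealCLM.contDiff.comp hdφ
  have hc : ContDiff ℝ (⊤ : ℕ∞) c := ha.mul (hdφC.inv (fun r => by
    simpa using Complex.ofReal_ne_zero.2 (hdφ0 r)))
  have hcc : HasCompactSupport c := hca.mul_right
  have hc0 : c 0 = 0 := by simp [hc_def, ha0]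
  have hcdφ : ∀ r, c r * (dφ r : ℂ) = a r := by
    intro r
    rw [hc_def]
    field_simp
    rw [mul_div_assoc, div_self (Complex.ofReal_ne_zero.2 (hdφ0 r)), mul_one]
  set M := ∫ r in Set.Ioi (0:ℝ), ‖deriv c r‖ with hM_def
  have key : ∀ t : ℝ, t ≠ 0 →
      ‖∫ r in Set.Ioi (0:ℝ), a r * Complex.exp (-Complex.I * t * φ r)‖ ≤ M / |t| :=
    fun t ht => osc1D_bound a φ dφ ha hφ hdφ c hc hcc hc0 hcdφ t ht
  have hev : ∀ᶠ t : ℝ in cocompact ℝ, 1 ≤ |t| := by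
    have := tendsto_norm_cocompact_atTop (E := ℝ)
    simpa [Real.norm_eq_abs] using this.eventually_ge_atTop 1
  refine squeeze_zero_norm' (a := fun t => M / |t|) ?_ ?_
  · filter_upwards [hev] with t ht
    exact key t (by intro h; rw [h] at ht; simp at ht; linarith)
  · have h1 : Tendsto (fun t : ℝ => |t|) (cocompact ℝ) atTop := by
      have := tendsto_norm_cocompact_atTop (E := ℝ)
      exact Tendsto.congr Real.norm_eq_abs this
    have h2 : Tendsto (fun t : ℝ => |t|⁻¹) (cocompact ℝ) (nhds 0) :=
      tendsto_inv_atTop_zero.comp h1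
    have := h2.const_mul M
    simpa [div_eq_mul_inv] using this

lemma polar3 (f : V → ℂ) (hf : Integrable f) :
    ∫ x, f x = ∫ ω : sphere (0:V) 1,
      (∫ r in Set.Ioi (0:ℝ), (r:ℝ)^2 • f (r • (ω:V))) ∂(volume.toSphere) := by
  have hs : MeasurableSet ({0}ᶜ : Set V) := (measurableSet_singleton 0).compl
  have hdim : Module.finrank ℝ V - 1 = 2 := by
    rw [finrank_euclideanSpace_fin]
  set g : sphere (0:V) 1 × Set.Ioi (0:ℝ) → ℂ := fun p => f (p.2.1 • p.1.1) with hg_def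
  have mp := (volume : Measure V).measurePreserving_homeomorphUnitSphereProd
  rw [hdim] at mp
  have hge : ∀ x : ({0}ᶜ : Set V), g (homeomorphUnitSphereProd V x) = f x.1 := by
    intro x
    simp only [hg_def, homeomorphUnitSphereProd_apply_fst_coe,
      homeomorphUnitSphereProd_apply_snd_coe]
    rw [smul_inv_smul₀ (norm_ne_zero_iff.2 x.2)]
  have hfS : Integrable (fun x : ({0}ᶜ : Set V) => f x.1) (volume.comap Subtype.val) := by
    have h1 : Integrable f (((volume : Measure V).comap Subtype.val).map
        (Subtype.val : ({0}ᶜ : Set V) → V)) := by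
      rw [(MeasurableEmbedding.subtype_coe hs).map_comap, Subtype.range_coe]
      exact hf.restrict
    exact ((MeasurableEmbedding.subtype_coe hs).integrable_map_iff).1 h1
  have hgInt : Integrable g ((volume : Measure V).toSphere.prod (Measure.volumeIoiPow 2)) := by
    refine (mp.integrable_comp_emb (Homeomorph.measurableEmbedding _)).1 ?_
    apply hfS.congr
    filter_upwards with x
    exact (hge x).symm
  calc ∫ x, f x ∂(volume : Measure V)
      = ∫ x in ({0}ᶜ : Set V), f x ∂volume := by
        rw [MeasureTheory.restrict_compl_singleton]
    _ = ∫ x : ({0}ᶜ : Set V), f x.1 ∂(volume.comap Subtype.val) :=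
        (integral_subtype_comap hs f).symm
    _ = ∫ p, g p ∂((volume : Measure V).toSphere.prod (Measure.volumeIoiPow 2)) := by
        rw [← mp.integral_comp (Homeomorph.measurableEmbedding _) g]
        exact integral_congr_ae (Filter.Eventually.of_forall (fun x => (hge x).symm))
    _ = ∫ ω : sphere (0:V) 1, (∫ r : Set.Ioi (0:ℝ), g (ω, r) ∂(Measure.volumeIoiPow 2))
          ∂(volume.toSphere) := integral_prod g hgInt
    _ = _ := by
        apply integral_congr_ae
        filter_upwards with ω
        have : ∫ r : Set.Ioi (0:ℝ), g (ω, r) ∂(Measure.volumeIoiPow 2)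
            = ∫ r : Set.Ioi (0:ℝ), ((r.1^2).toNNReal : ℝ≥0) • f (r.1 • (ω:V))
                ∂((volume : Measure ℝ).comap Subtype.val) := by
          rw [Measure.volumeIoiPow]
          simp only [ENNReal.ofReal]
          rw [integral_withDensity_eq_integral_smul
            ((measurable_subtype_coe.pow_const 2).real_toNNReal)]
        rw [this, integral_subtype_comap measurableSet_Ioi
          (fun r : ℝ => ((r^2).toNNReal : ℝ≥0) • f (r • (ω:V)))]
        refine setIntegral_congr_fun measurableSet_Ioi fun r hr => ?_
        rw [NNReal.smul_def, Real.coe_toNNReal _ (sq_nonneg r)]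

noncomputable def E (m : ℝ) (l : EuclideanSpace ℝ (Fin 3)) : ℝ :=
  Real.sqrt (‖l‖ ^ 2 + m ^ 2)

lemma E_pos {m : ℝ} (hm : 0 < m) (l : V) : 0 < E m l :=
  Real.sqrt_pos.2 (by positivity)

lemma norm_lt_E {m : ℝ} (hm : 0 < m) (l : V) : ‖l‖ < E m l := by
  have : ‖l‖ = Real.sqrt (‖l‖ ^ 2) := by
    rw [Real.sqrt_sq (norm_nonneg l)]
  rw [this, E]
  apply Real.sqrt_lt_sqrt (sq_nonneg _)
  nlinarith [sq_nonneg ‖l‖]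

lemma contDiff_E {m : ℝ} (hm : 0 < m) : ContDiff ℝ (⊤ : ℕ∞) (E m) := by
  apply ContDiff.sqrt
  · exact (contDiff_norm_sq ℝ).add contDiff_const
  · intro l; positivity

lemma hasDerivAt_E_line {m : ℝ} (hm : 0 < m) (q ω : V) (r : ℝ) :
    HasDerivAt (fun r : ℝ => E m (q + r • ω))
      (⟪q + r • ω, ω⟫ / E m (q + r • ω)) r := by
  have hv : HasDerivAt (fun r : ℝ => q + r • ω) ω r := by
    simpa using ((hasDerivAt_id r).smul_const ω).const_add q
  have hinner : HasDerivAt (fun r : ℝ => ⟪q + r • ω, q + r • ω⟫)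
      (2 * ⟪q + r • ω, ω⟫) r := by
    have := hv.inner ℝ hv
    refine this.congr_deriv ?_
    rw [real_inner_comm]
    ring
  have hu : HasDerivAt (fun r : ℝ => ⟪q + r • ω, q + r • ω⟫ + m ^ 2)
      (2 * ⟪q + r • ω, ω⟫) r := hinner.add_const _
  have hne : ⟪q + r • ω, q + r • ω⟫ + m ^ 2 ≠ 0 := by
    have := real_inner_self_nonneg (x := q + r • ω)
    positivity
  have hsq := (Real.hasDerivAt_sqrt hne).comp r hu
  have hE : (fun r : ℝ => E m (q + r • ω))
      = fun r : ℝ => Real.sqrt (⟪q + r • ω, q + r • ω⟫ + m ^ 2) := by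
    funext s
    rw [E, real_inner_self_eq_norm_sq]
  rw [hE]
  refine hsq.congr_deriv ?_
  rw [E, real_inner_self_eq_norm_sq]
  field_simp

lemma pointwise_qomega {m : ℝ} (hm : 0 < m)
    (h : V × V → ℂ) (hsm : ContDiff ℝ (⊤ : ℕ∞) h) (hcs : HasCompactSupport h)
    (q ω : V) (hω : ‖ω‖ = 1) :
    Tendsto (fun t : ℝ => ∫ r in Set.Ioi (0:ℝ), (r:ℝ)^2 •
      (h (q, r • ω) *
        (Complex.exp (-Complex.I * t * ((E m (q + r • ω) - E m q - ‖r • ω‖ : ℝ))) -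
         Complex.exp (-Complex.I * t * ((⟪q, r • ω⟫ / E m q - ‖r • ω‖ : ℝ))))))
      (cocompact ℝ) (nhds 0) := by
  set a : ℝ → ℂ := fun r => ((r^2 : ℝ) : ℂ) * h (q, r • ω) with ha_def
  set φ₁ : ℝ → ℝ := fun r => E m (q + r • ω) - E m q - r with hφ₁_def
  set dφ₁ : ℝ → ℝ := fun r => ⟪q + r • ω, ω⟫ / E m (q + r • ω) - 1 with hdφ₁_def
  set φ₂ : ℝ → ℝ := fun r => r * ⟪q, ω⟫ / E m q - r with hφ₂_def
  set dφ₂ : ℝ → ℝ := fun _ => ⟪q, ω⟫ / E m q - 1 with hdφ₂_def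
  have hline : ContDiff ℝ (⊤ : ℕ∞) (fun r : ℝ => q + r • ω) :=
    contDiff_const.add (contDiff_id.smul contDiff_const)
  have ha : ContDiff ℝ (⊤ : ℕ∞) a := by
    apply ContDiff.mul
    · exact Complex.ofRealCLM.contDiff.comp (contDiff_id.pow 2)
    · exact hsm.comp (contDiff_const.prodMk (contDiff_id.smul contDiff_const))
  obtain ⟨R, hR⟩ := hcs.isBounded.subset_closedBall 0
  have hhz : ∀ r : ℝ, R < |r| → h (q, r • ω) = 0 := by
    intro r hr
    by_contra hne
    have hmem := hR (subset_tsupport h hne)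
    simp only [Metric.mem_closedBall, dist_zero_right] at hmem
    have h2 : ‖r • ω‖ ≤ ‖(q, r • ω)‖ := norm_snd_le (q, r • ω)
    rw [norm_smul, hω, mul_one, Real.norm_eq_abs] at h2
    linarith [le_trans h2 hmem]
  have hca : HasCompactSupport a := by
    apply HasCompactSupport.intro (isCompact_Icc (a := -R) (b := R))
    intro r hr
    have : R < |r| := by
      rcases abs_cases r with ⟨he, _⟩ | ⟨he, _⟩ <;>
        · simp only [Set.mem_Icc, not_and_or, not_le] at hr
          rcases hr with h' | h' <;> [skip; skip] <;> rw [he] <;> linarith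
    simp [ha_def, hhz r this]
  have ha0 : a 0 = 0 := by simp [ha_def]
  have hφ₁d : ∀ r, HasDerivAt φ₁ (dφ₁ r) r := by
    intro r
    have := ((hasDerivAt_E_line hm q ω r).sub_const (E m q)).sub (hasDerivAt_id r)
    simpa [hφ₁_def, hdφ₁_def, Pi.sub_def] using this
  have hEline : ContDiff ℝ (⊤ : ℕ∞) (fun r : ℝ => E m (q + r • ω)) := (contDiff_E hm).comp hline
  have hdφ₁ : ContDiff ℝ (⊤ : ℕ∞) dφ₁ := by
    apply ContDiff.sub _ contDiff_const
    apply ContDiff.div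
    · exact hline.inner ℝ contDiff_const
    · exact hEline
    · exact fun r => (E_pos hm _).ne'
  have hneg₁ : ∀ r, dφ₁ r < 0 := by
    intro r
    have h1 : ⟪q + r • ω, ω⟫ < E m (q + r • ω) := by
      calc ⟪q + r • ω, ω⟫ ≤ ‖q + r • ω‖ * ‖ω‖ := real_inner_le_norm _ _
        _ = ‖q + r • ω‖ := by rw [hω, mul_one]
        _ < E m (q + r • ω) := norm_lt_E hm _
    have := (div_lt_one (E_pos hm (q + r • ω))).2 h1
    simp only [hdφ₁_def]
    linarith
  have hφ₂d : ∀ r, HasDerivAt φ₂ (dφ₂ r) r := by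
    intro r
    have := ((hasDerivAt_id r).mul_const (⟪q, ω⟫ / E m q)).sub (hasDerivAt_id r)
    simpa [hφ₂_def, hdφ₂_def, mul_div_assoc, Pi.sub_def] using this
  have hneg₂ : ∀ r, dφ₂ r < 0 := by
    intro r
    have h1 : ⟪q, ω⟫ < E m q := by
      calc ⟪q, ω⟫ ≤ ‖q‖ * ‖ω‖ := real_inner_le_norm _ _
        _ = ‖q‖ := by rw [hω, mul_one]
        _ < E m q := norm_lt_E hm _
    have := (div_lt_one (E_pos hm q)).2 h1
    simp only [hdφ₂_def]
    linarith
  have key := (osc1D a φ₁ dφ₁ ha hca ha0 hφ₁d hdφ₁ hneg₁).sub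
    (osc1D a φ₂ dφ₂ ha hca ha0 hφ₂d (contDiff_const) hneg₂)
  rw [sub_zero] at key
  apply key.congr
  intro t
  have hint : ∀ (ψ : ℝ → ℝ), Continuous ψ →
      IntegrableOn (fun r => a r * Complex.exp (-Complex.I * t * ψ r)) (Set.Ioi (0:ℝ)) := by
    intro ψ hψ
    apply MeasureTheory.Integrable.integrableOn
    apply Continuous.integrable_of_hasCompactSupport
    · exact ha.continuous.mul (Complex.continuous_exp.comp
        (continuous_const.mul (Complex.continuous_ofReal.comp hψ)))
    · exact hca.mul_right
  have hφ₁c : Continuous φ₁ := (hEline.continuous.sub continuous_const).sub continuous_id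
  have hφ₂c : Continuous φ₂ := ((continuous_id.mul continuous_const).div_const _).sub continuous_id
  rw [← MeasureTheory.integral_sub (hint φ₁ hφ₁c) (hint φ₂ hφ₂c)]
  symm
  apply MeasureTheory.setIntegral_congr_fun measurableSet_Ioi
  intro r hr
  have h1 : ‖r • ω‖ = r := by
    rw [norm_smul, hω, mul_one, Real.norm_eq_abs, abs_of_pos hr]
  have h2 : ⟪q, r • ω⟫ = r * ⟪q, ω⟫ := real_inner_smul_right q ω r
  simp only [h1, h2, ha_def, hφ₁_def, hφ₂_def]
  rw [Complex.real_smul]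
  push_cast
  ring

lemma norm_cexp_eq_one (t x : ℝ) : ‖Complex.exp (-Complex.I * t * x)‖ = 1 := by
  simp only [Complex.norm_exp]
  have : (-Complex.I * t * x).re = 0 := by simp
  rw [this, Real.exp_zero]

lemma instCG : (cocompact ℝ).IsCountablyGenerated := by
  rw [cocompact_eq_atBot_atTop]; infer_instance

lemma per_q {m : ℝ} (hm : 0 < m)
    (h : V × V → ℂ) (hsm : ContDiff ℝ (⊤ : ℕ∞) h) (hcs : HasCompactSupport h) (q : V) :
    Tendsto (fun t : ℝ => ∫ k : V, h (q, k) *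
      (Complex.exp (-Complex.I * t * ((E m (q + k) - E m q - ‖k‖ : ℝ))) -
       Complex.exp (-Complex.I * t * ((⟪q, k⟫ / E m q - ‖k‖ : ℝ)))))
      (cocompact ℝ) (nhds 0) := by
  haveI := instCG
  set f : ℝ → V → ℂ := fun t k => h (q, k) *
      (Complex.exp (-Complex.I * t * ((E m (q + k) - E m q - ‖k‖ : ℝ))) -
       Complex.exp (-Complex.I * t * ((⟪q, k⟫ / E m q - ‖k‖ : ℝ)))) with hf_def
  obtain ⟨C, hC⟩ := hcs.exists_bound_of_continuous hsm.continuous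
  have hC0 : 0 ≤ C := le_trans (norm_nonneg _) (hC (0, 0))
  have hfnorm : ∀ t k, ‖f t k‖ ≤ 2 * C := by
    intro t k
    rw [hf_def]
    simp only
    rw [norm_mul]
    calc ‖h (q, k)‖ * ‖_ - _‖ ≤ C * 2 := by
          apply mul_le_mul (hC _) _ (norm_nonneg _) hC0
          refine (norm_sub_le _ _).trans ?_
          rw [norm_cexp_eq_one, norm_cexp_eq_one]; norm_num
      _ = 2 * C := by ring
  have hEc : Continuous (E m) := (contDiff_E hm).continuous
  have hfc : ∀ t, Continuous (f t) := by
    intro t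
    apply Continuous.mul
    · exact hsm.continuous.comp (continuous_const.prodMk continuous_id)
    · apply Continuous.sub <;>
      · apply Complex.continuous_exp.comp
        apply Continuous.mul continuous_const
        apply Complex.continuous_ofReal.comp
        first
        | exact ((hEc.comp (continuous_const.add continuous_id)).sub continuous_const).sub
            continuous_norm
        | exact ((Continuous.inner continuous_const continuous_id).div_const _).sub
            continuous_norm
  have hfz : ∀ t (k : V), h (q, k) = 0 → f t k = 0 := by
    intro t k hk; rw [hf_def]; simp [hk]
  obtain ⟨R, hR⟩ := hcs.isBounded.subset_closedBall 0
  have hhz : ∀ k : V, R < ‖k‖ → h (q, k) = 0 := by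
    intro k hk
    by_contra hne
    have hmem := hR (subset_tsupport h hne)
    simp only [Metric.mem_closedBall, dist_zero_right] at hmem
    linarith [le_trans (norm_snd_le (q, k)) hmem]
  have hfcs : ∀ t, HasCompactSupport (f t) := by
    intro t
    apply HasCompactSupport.intro (isCompact_closedBall (0:V) R)
    intro k hk
    simp only [Metric.mem_closedBall, dist_zero_right, not_le] at hk
    exact hfz t k (hhz k hk)
  have hfint : ∀ t, Integrable (f t) := fun t =>
    (hfc t).integrable_of_hasCompactSupport (hfcs t)
  have hrw : ∀ t : ℝ, (∫ k, f t k) = ∫ ω : sphere (0:V) 1,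
      (∫ r in Set.Ioi (0:ℝ), (r:ℝ)^2 • f t (r • (ω:V))) ∂((volume : Measure V).toSphere) :=
    fun t => polar3 (f t) (hfint t)
  have hgoal : Tendsto (fun t : ℝ => ∫ ω : sphere (0:V) 1,
      (∫ r in Set.Ioi (0:ℝ), (r:ℝ)^2 • f t (r • (ω:V))) ∂((volume : Measure V).toSphere))
      (cocompact ℝ) (nhds 0) := by
    set bnd : ℝ → ℝ := (Set.Icc (0:ℝ) R).indicator (fun r => r^2 * (2*C)) with hbnd_def
    have hbnd_int : Integrable bnd (volume.restrict (Set.Ioi (0:ℝ))) := by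
      apply Integrable.restrict
      apply MeasureTheory.IntegrableOn.integrable_indicator _ measurableSet_Icc
      exact (continuous_pow 2 |>.mul continuous_const).integrableOn_Icc
    have hptbnd : ∀ (t : ℝ) (ω : sphere (0:V) 1), ∀ᵐ r ∂(volume.restrict (Set.Ioi (0:ℝ))),
        ‖(r:ℝ)^2 • f t (r • (ω:V))‖ ≤ bnd r := by
      intro t ω
      rw [ae_restrict_iff' measurableSet_Ioi]
      apply Filter.Eventually.of_forall
      intro r hr
      have hω : ‖(ω:V)‖ = 1 := mem_sphere_zero_iff_norm.1 ω.2
      have hrn : ‖r • (ω:V)‖ = r := by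
        rw [norm_smul, hω, mul_one, Real.norm_eq_abs, abs_of_pos hr]
      by_cases hcase : r ≤ R
      · have : bnd r = r^2 * (2*C) := by
          rw [hbnd_def, Set.indicator_of_mem (Set.mem_Icc.2 ⟨le_of_lt hr, hcase⟩)]
        rw [this, norm_smul, Real.norm_eq_abs]
        have := hfnorm t (r • (ω:V))
        calc |r^2| * ‖f t (r • (ω:V))‖ = r^2 * ‖f t (r • (ω:V))‖ := by rw [abs_of_nonneg (sq_nonneg r)]
          _ ≤ r^2 * (2*C) := by
              apply mul_le_mul_of_nonneg_left this (sq_nonneg r)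
      · have h1 : f t (r • (ω:V)) = 0 := by
          apply hfz
          apply hhz
          rw [hrn]; linarith
        have h2 : bnd r = 0 := by
          rw [hbnd_def, Set.indicator_of_notMem]
          intro hmem
          exact hcase (Set.mem_Icc.1 hmem).2
        rw [h1, h2, smul_zero, norm_zero]
    have hmeas : ∀ t : ℝ, AEStronglyMeasurable
        (fun ω : sphere (0:V) 1 => ∫ r in Set.Ioi (0:ℝ), (r:ℝ)^2 • f t (r • (ω:V)))
        ((volume : Measure V).toSphere) := by
      intro t
      apply Continuous.aestronglyMeasurable
      apply MeasureTheory.continuous_of_dominated (bound := bnd)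
      · intro ω
        apply Continuous.aestronglyMeasurable
        apply Continuous.smul (continuous_pow 2)
        exact (hfc t).comp (continuous_id.smul continuous_const)
      · exact hptbnd t
      · exact hbnd_int
      · apply Filter.Eventually.of_forall
        intro r
        refine (show Continuous fun x : sphere (0:V) 1 => f t (r • (x:V)) from ?_).const_smul (r^2)
        exact (hfc t).comp (continuous_subtype_val.const_smul r)
    have hB : Integrable (fun _ : sphere (0:V) 1 => ∫ r in Set.Ioi (0:ℝ), bnd r)
        ((volume : Measure V).toSphere) := integrable_const _
    have := tendsto_integral_filter_of_dominated_convergence (μ := (volume : Measure V).toSphere)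
      (F := fun t (ω : sphere (0:V) 1) => ∫ r in Set.Ioi (0:ℝ), (r:ℝ)^2 • f t (r • (ω:V)))
      (f := fun _ => (0:ℂ)) (fun _ => ∫ r in Set.Ioi (0:ℝ), bnd r)
      (Filter.Eventually.of_forall hmeas)
      (by
        apply Filter.Eventually.of_forall
        intro t
        apply Filter.Eventually.of_forall
        intro ω
        refine (norm_integral_le_integral_norm _).trans ?_
        exact integral_mono_of_nonneg (Filter.Eventually.of_forall fun r => norm_nonneg _)
          hbnd_int (hptbnd t ω))
      hB
      (by
        apply Filter.Eventually.of_forall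
        intro ω
        exact pointwise_qomega hm h hsm hcs q ω (mem_sphere_zero_iff_norm.1 ω.2))
    simpa using this
  apply hgoal.congr
  intro t
  exact (hrw t).symm

theorem stmt_15 (m : ℝ) (hm : 0 < m)
    (h : EuclideanSpace ℝ (Fin 3) × EuclideanSpace ℝ (Fin 3) → ℂ)
    (hsm : ContDiff ℝ (⊤ : ℕ∞) h) (hcs : HasCompactSupport h) :
    Tendsto (fun t : ℝ =>
        ∫ q : EuclideanSpace ℝ (Fin 3), ∫ k : EuclideanSpace ℝ (Fin 3),
          h (q, k) *
            (Complex.exp (-Complex.I * t * ((E m (q + k) - E m q - ‖k‖ : ℝ))) -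
             Complex.exp (-Complex.I * t * ((⟪q, k⟫ / E m q - ‖k‖ : ℝ)))))
      (cocompact ℝ) (nhds 0) := by
  haveI := instCG
  set g : ℝ → V × V → ℂ := fun t p => h p *
      (Complex.exp (-Complex.I * t * ((E m (p.1 + p.2) - E m p.1 - ‖p.2‖ : ℝ))) -
       Complex.exp (-Complex.I * t * ((⟪p.1, p.2⟫ / E m p.1 - ‖p.2‖ : ℝ)))) with hg_def
  have hEc : Continuous (E m) := (contDiff_E hm).continuous
  have hEne : ∀ l : V, E m l ≠ 0 := fun l =>
    (Real.sqrt_pos.2 (by positivity)).ne'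
  have hgc : ∀ t, Continuous (g t) := by
    intro t
    apply Continuous.mul hsm.continuous
    apply Continuous.sub <;>
    · apply Complex.continuous_exp.comp
      apply Continuous.mul continuous_const
      apply Complex.continuous_ofReal.comp
      first
      | exact ((hEc.comp (continuous_fst.add continuous_snd)).sub
          (hEc.comp continuous_fst)).sub (continuous_norm.comp continuous_snd)
      | exact (Continuous.div (Continuous.inner continuous_fst continuous_snd)
          (hEc.comp continuous_fst) (fun p => hEne p.1)).sub
          (continuous_norm.comp continuous_snd)
  obtain ⟨C, hC⟩ := hcs.exists_bound_of_continuous hsm.continuous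
  have hC0 : 0 ≤ C := le_trans (norm_nonneg _) (hC (0, 0))
  have hgnorm : ∀ t p, ‖g t p‖ ≤ 2 * C := by
    intro t p
    rw [hg_def]
    simp only
    rw [norm_mul]
    calc ‖h p‖ * ‖_ - _‖ ≤ C * 2 := by
          apply mul_le_mul (hC _) _ (norm_nonneg _) hC0
          refine (norm_sub_le _ _).trans ?_
          rw [norm_cexp_eq_one, norm_cexp_eq_one]; norm_num
      _ = 2 * C := by ring
  set K₁ : Set V := Prod.fst '' tsupport h with hK₁_def
  set K₂ : Set V := Prod.snd '' tsupport h with hK₂_def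
  have hK₁c : IsCompact K₁ := hcs.image continuous_fst
  have hK₂c : IsCompact K₂ := hcs.image continuous_snd
  have hz₁ : ∀ q : V, q ∉ K₁ → ∀ k : V, h (q, k) = 0 := by
    intro q hq k
    by_contra hne
    exact hq ⟨(q, k), subset_tsupport h hne, rfl⟩
  have hz₂ : ∀ (q k : V), k ∉ K₂ → h (q, k) = 0 := by
    intro q k hk
    by_contra hne
    exact hk ⟨(q, k), subset_tsupport h hne, rfl⟩
  set B : ℝ := ((volume : Measure V) K₂).toReal * (2 * C) with hB_def
  set bound : V → ℝ := K₁.indicator (fun _ => B) with hbound_def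
  have hbound_int : Integrable bound := by
    apply MeasureTheory.IntegrableOn.integrable_indicator _ hK₁c.isClosed.measurableSet
    exact integrableOn_const hK₁c.measure_lt_top.ne
  have hind_int : Integrable (K₂.indicator (fun _ : V => 2 * C)) := by
    apply MeasureTheory.IntegrableOn.integrable_indicator _ hK₂c.isClosed.measurableSet
    exact integrableOn_const hK₂c.measure_lt_top.ne
  have hgb : ∀ t (q : V), ∀ k : V, ‖g t (q, k)‖ ≤ K₂.indicator (fun _ : V => 2 * C) k := by
    intro t q k
    by_cases hk : k ∈ K₂
    · rw [Set.indicator_of_mem hk]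
      exact hgnorm t (q, k)
    · rw [Set.indicator_of_notMem hk]
      have : g t (q, k) = 0 := by rw [hg_def]; simp [hz₂ q k hk]
      rw [this, norm_zero]
  have key := tendsto_integral_filter_of_dominated_convergence (μ := (volume : Measure V))
    (F := fun t q => ∫ k : V, g t (q, k)) (f := fun _ => (0:ℂ)) bound
    (by
      apply Filter.Eventually.of_forall
      intro t
      exact ((hgc t).stronglyMeasurable.integral_prod_right').aestronglyMeasurable)
    (by
      apply Filter.Eventually.of_forall
      intro t
      apply Filter.Eventually.of_forall
      intro q
      show ‖∫ k : V, g t (q, k)‖ ≤ bound q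
      by_cases hq : q ∈ K₁
      · have h1 : bound q = B := by rw [hbound_def, Set.indicator_of_mem hq]
        rw [h1]
        refine (norm_integral_le_integral_norm _).trans ?_
        have h2 : ∫ k : V, K₂.indicator (fun _ : V => 2 * C) k = B := by
          rw [integral_indicator_const _ hK₂c.isClosed.measurableSet, hB_def, smul_eq_mul, measureReal_def]
        rw [← h2]
        exact integral_mono_of_nonneg (Filter.Eventually.of_forall fun k => norm_nonneg _)
          hind_int (Filter.Eventually.of_forall (hgb t q))
      · have h1 : bound q = 0 := by rw [hbound_def, Set.indicator_of_notMem hq]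
        have h2 : (∫ k : V, g t (q, k)) = 0 := by
          have : ∀ k : V, g t (q, k) = 0 := by
            intro k; rw [hg_def]; simp [hz₁ q hq k]
          simp only [this, integral_zero]
        rw [h1, h2, norm_zero])
    hbound_int
    (by
      apply Filter.Eventually.of_forall
      intro q
      exact per_q hm h hsm hcs q)
  simpa only [integral_zero] using key
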